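/- For any integer k with 0 ≤ k < n such that λ_{k+1} > 0 and k + r_k > n, the overfitting coefficient satisfies E_0 ≤ (1 − k/n)^{−1} · (1 − n/(k + r_k))^{−1}. -/

import Mathlib

/-!
Write `L_i = λ_i / (λ_i + κ₀)`, so that `Σ L_i = n` and `L` is antitone with values in `[0, 1)`.
Splitting at `k`, `Σ L_i² ≤ Σ_{i<k} L_i + L_k Σ_{i≥k} L_i`, hence
`n − Σ L_i² ≥ (1 − L_k) Σ_{i≥k} L_i ≥ (1 − L_k)(n − k)`.
On the other hand `k L_k ≤ Σ_{i<k} L_i` and `L_k r_k = Σ_{i≥k} λ_i / (λ_k + κ₀) ≤ Σ_{i≥k} L_i`,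
so `L_k (k + r_k) ≤ n`. Combining the two bounds gives the estimate on `E₀ = n / (n − Σ L_i²)`.
-/

open Finset

section AntitoneUnitSequence

variable {L : ℕ → ℝ}

theorem tsum_sq_le_sum_range_add_mul_tsum (h0 : ∀ i, 0 ≤ L i) (h1 : ∀ i, L i ≤ 1)
    (hL : Antitone L) (hs : Summable L) (k : ℕ) :
    ∑' i, L i ^ 2 ≤ ∑ i ∈ range k, L i + L k * ∑' i, L (i + k) := by
  have hsq_le : ∀ i, L i ^ 2 ≤ L i := fun i => pow_le_of_le_one (h0 i) (h1 i) two_ne_zero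
  have hs2 : Summable fun i => L i ^ 2 := hs.of_nonneg_of_le (fun i => sq_nonneg _) hsq_le
  have htail : Summable fun i => L (i + k) := (summable_nat_add_iff k).mpr hs
  rw [← hs2.sum_add_tsum_nat_add k, ← tsum_mul_left]
  refine add_le_add (sum_le_sum fun i _ => hsq_le i) ?_
  refine ((summable_nat_add_iff k).mpr hs2).tsum_le_tsum (fun i => ?_) (htail.mul_left _)
  rw [sq]
  exact mul_le_mul_of_nonneg_right (hL (Nat.le_add_left k i)) (h0 _)

theorem sub_mul_one_sub_le_tsum_sub_tsum_sq (h0 : ∀ i, 0 ≤ L i) (h1 : ∀ i, L i ≤ 1)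
    (hL : Antitone L) (hs : Summable L) (k : ℕ) :
    (∑' i, L i - k) * (1 - L k) ≤ ∑' i, L i - ∑' i, L i ^ 2 := by
  have hsplit := hs.sum_add_tsum_nat_add k
  have hhead : ∑ i ∈ range k, L i ≤ k := by
    simpa using sum_le_card_nsmul (range k) L 1 fun i _ => h1 i
  calc (∑' i, L i - k) * (1 - L k) ≤ (∑' i, L (i + k)) * (1 - L k) :=
        mul_le_mul_of_nonneg_right (by linarith) (by linarith [h1 k])
    _ ≤ ∑' i, L i - ∑' i, L i ^ 2 := by
        linear_combination tsum_sq_le_sum_range_add_mul_tsum h0 h1 hL hs k + hsplit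

end AntitoneUnitSequence

noncomputable def learnability (lam : ℕ → ℝ) (κ : ℝ) (i : ℕ) : ℝ := lam i / (lam i + κ)

/-- `lam k` is the paper's `λ_{k+1}`, so this is `r_k`. -/
noncomputable def effectiveRank (lam : ℕ → ℝ) (k : ℕ) : ℝ := (∑' i, lam (k + i)) / lam k

section Learnability

variable {lam : ℕ → ℝ} {κ : ℝ}

theorem learnability_nonneg (hlam : ∀ i, 0 ≤ lam i) (hκ : 0 < κ) (i : ℕ) :
    0 ≤ learnability lam κ i :=
  div_nonneg (hlam i) (by linarith [hlam i])

theorem learnability_le_one (hlam : ∀ i, 0 ≤ lam i) (hκ : 0 < κ) (i : ℕ) :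
    learnability lam κ i ≤ 1 :=
  div_le_one_of_le₀ (by linarith) (by linarith [hlam i])

theorem antitone_learnability (hlam : ∀ i, 0 ≤ lam i) (hmono : Antitone lam) (hκ : 0 < κ) :
    Antitone (learnability lam κ) := by
  intro i j hij
  have hj := hlam j
  have hji := hmono hij
  unfold learnability
  rw [div_le_div_iff₀ (by linarith) (by linarith)]
  nlinarith

theorem summable_learnability (hlam : ∀ i, 0 ≤ lam i) (hs : Summable lam) (hκ : 0 < κ) :
    Summable (learnability lam κ) :=
  (hs.div_const κ).of_nonneg_of_le (learnability_nonneg hlam hκ) fun i =>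
    div_le_div_of_nonneg_left (hlam i) hκ (le_add_of_nonneg_left (hlam i))

theorem div_add_le_learnability (hlam : ∀ i, 0 ≤ lam i) (hκ : 0 < κ) {i k : ℕ}
    (hik : lam i ≤ lam k) :
    lam i / (lam k + κ) ≤ learnability lam κ i :=
  div_le_div_of_nonneg_left (hlam i) (by linarith [hlam i]) (by linarith)

theorem learnability_mul_add_effectiveRank_le_tsum (hlam : ∀ i, 0 ≤ lam i) (hmono : Antitone lam)
    (hs : Summable lam) (hκ : 0 < κ) {k : ℕ} (hk : 0 < lam k) :
    learnability lam κ k * (k + effectiveRank lam k) ≤ ∑' i, learnability lam κ i := by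
  have hsL := summable_learnability hlam hs hκ
  have hhead : k * learnability lam κ k ≤ ∑ i ∈ range k, learnability lam κ i := by
    simpa using card_nsmul_le_sum (range k) _ _ fun i hi =>
      antitone_learnability hlam hmono hκ (mem_range.mp hi).le
  have hrank :
      learnability lam κ k * effectiveRank lam k = (∑' i, lam (i + k)) / (lam k + κ) := by
    simp only [learnability, effectiveRank, add_comm k]
    field_simp
  have htail : (∑' i, lam (i + k)) / (lam k + κ) ≤ ∑' i, learnability lam κ (i + k) := by
    rw [← tsum_div_const]
    exact ((summable_nat_add_iff k).mpr hs |>.div_const _).tsum_le_tsum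
      (fun i => div_add_le_learnability hlam hκ (hmono (Nat.le_add_left k i)))
      ((summable_nat_add_iff k).mpr hsL)
  rw [← hsL.sum_add_tsum_nat_add k, mul_add, hrank]
  linarith

end Learnability

theorem div_le_inv_one_sub_div_mul_inv {n k b D : ℝ} (hk : 0 ≤ k) (hkn : k < n) (hb : 0 < b)
    (hD : (n - k) * b ≤ D) : n / D ≤ (1 - k / n)⁻¹ * b⁻¹ := by
  have hn : 0 < n := by linarith
  calc n / D ≤ n / ((n - k) * b) :=
        div_le_div_of_nonneg_left hn.le (mul_pos (by linarith) hb) hD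
    _ = (1 - k / n)⁻¹ * b⁻¹ := by
        rw [one_sub_div hn.ne', inv_div, div_mul_eq_div_div, div_eq_mul_inv _ b]

theorem e0_upper_bound_rk_general
    (n : ℕ)
    (lam : ℕ → ℝ) (hlam_nonneg : ∀ i, 0 ≤ lam i) (hlam_mono : Antitone lam)
    (hlam_summable : Summable lam)
    (κ0 : ℝ) (hκ0 : 0 < κ0)
    (hκ0_eq : ∑' i, lam i / (lam i + κ0) = (n : ℝ))
    (E0 : ℝ)
    (hE0 : E0 = (n : ℝ) / ((n : ℝ) - ∑' i, (lam i / (lam i + κ0)) ^ 2))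
    (k : ℕ) (hk : k < n) (hlamk : 0 < lam k)
    (r : ℕ → ℝ) (hr : ∀ j, r j = (∑' i, lam (j + i)) / lam j)
    (hkr : (n : ℝ) < (k : ℝ) + r k) :
    E0 ≤ (1 - (k : ℝ) / n)⁻¹ * (1 - (n : ℝ) / ((k : ℝ) + r k))⁻¹ := by
  set L := learnability lam κ0
  have hL_sum : ∑' i, L i = n := hκ0_eq
  have hkn : (k : ℝ) < n := by exact_mod_cast hk
  have hkr_pos : (0 : ℝ) < k + r k := by linarith [(Nat.cast_nonneg n : (0 : ℝ) ≤ n)]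
  have hLk : L k ≤ n / (k + r k) := by
    rw [le_div_iff₀ hkr_pos, hr k, ← hL_sum]
    exact learnability_mul_add_effectiveRank_le_tsum hlam_nonneg hlam_mono hlam_summable hκ0 hlamk
  have hgap : (n - k) * (1 - n / (k + r k)) ≤ n - ∑' i, L i ^ 2 :=
    calc (n - k) * (1 - n / (k + r k)) ≤ (n - k) * (1 - L k) := by gcongr
      _ ≤ n - ∑' i, L i ^ 2 := hL_sum ▸ sub_mul_one_sub_le_tsum_sub_tsum_sq
          (learnability_nonneg hlam_nonneg hκ0) (learnability_le_one hlam_nonneg hκ0)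
          (antitone_learnability hlam_nonneg hlam_mono hκ0)
          (summable_learnability hlam_nonneg hlam_summable hκ0) k
  rw [hE0]
  exact div_le_inv_one_sub_div_mul_inv (Nat.cast_nonneg k) hkn
    (sub_pos.mpr ((div_lt_one hkr_pos).mpr hkr)) hgap

/-- For any `0 ≤ k < n` with `λ_{k+1} > 0` and `k + r_k > n`,
`E_0 ≤ (1 − k/n)⁻¹ · (1 − n/(k + r_k))⁻¹`.
(Here `lam i` denotes `λ_{i+1}`, so `r k = (Σ_{i>k} λ_i)/λ_{k+1}`.) -/
theorem e0_upper_bound_rk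
    (n : ℕ) (hn : 1 ≤ n)
    (lam : ℕ → ℝ) (hlam_nonneg : ∀ i, 0 ≤ lam i) (hlam_mono : Antitone lam)
    (hlam_summable : Summable lam) (hlam_ne : ∃ i, lam i ≠ 0)
    (κ0 : ℝ) (hκ0 : 0 < κ0)
    (hκ0_eq : ∑' i, lam i / (lam i + κ0) = (n : ℝ))
    (E0 : ℝ)
    (hE0 : E0 = (n : ℝ) / ((n : ℝ) - ∑' i, (lam i / (lam i + κ0)) ^ 2))
    (k : ℕ) (hk : k < n) (hlamk : 0 < lam k)
    (r : ℕ → ℝ) (hr : ∀ j, r j = (∑' i, lam (j + i)) / lam j)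
    (hkr : (n : ℝ) < (k : ℝ) + r k) :
    E0 ≤ (1 - (k : ℝ) / n)⁻¹ * (1 - (n : ℝ) / ((k : ℝ) + r k))⁻¹ :=
  e0_upper_bound_rk_general n lam hlam_nonneg hlam_mono hlam_summable κ0 hκ0 hκ0_eq E0 hE0 k hk
    hlamk r hr hkr
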